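/- Let H be a real inner product space, a : H × H → ℝ a symmetric bilinear form, Δt > 0, and (u^k) a sequence in H satisfying ⟨∂̄_{tt}u^k, ũ⟩ + a(u^k, ũ) = 0 for all ũ in H, where ∂̄_{tt}u^k = (u^{k+1} - 2u^k + u^{k-1})/Δt². Define E^k = ½[‖∂̄ₜ⁺u^k‖² − (Δt²/4)a(∂̄ₜ⁺u^k, ∂̄ₜ⁺u^k) + a(ū^{k+1}, ū^{k+1})], where ∂̄ₜ⁺u^k = (u^{k+1}−u^k)/Δt and ū^{k+1} = (u^{k+1}+u^k)/2. Then E^k = E^{k-1} for all k ≥ 1. -/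

import Mathlib

/-- The discrete energy for the central difference scheme:
`E k = ½(‖∂ₜ⁺uᵏ‖² − (Δt²/4)a(∂ₜ⁺uᵏ,∂ₜ⁺uᵏ) + a(ūᵏ⁺¹,ūᵏ⁺¹))`. -/
noncomputable def discreteEnergy {H : Type*} [NormedAddCommGroup H]
    [InnerProductSpace ℝ H] (a : H → H → ℝ) (Δt : ℝ) (u : ℕ → H) (k : ℕ) : ℝ :=
  (1 / 2) * (‖Δt⁻¹ • (u (k + 1) - u k)‖ ^ 2
    - (Δt ^ 2 / 4) * a (Δt⁻¹ • (u (k + 1) - u k)) (Δt⁻¹ • (u (k + 1) - u k))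
    + a ((1 / 2 : ℝ) • (u (k + 1) + u k)) ((1 / 2 : ℝ) • (u (k + 1) + u k)))

theorem discrete_energy_conservation {H : Type*} [NormedAddCommGroup H]
    [InnerProductSpace ℝ H] (a : H → H → ℝ)
    (haddl : ∀ x y z, a (x + y) z = a x z + a y z)
    (hsmull : ∀ (c : ℝ) x y, a (c • x) y = c * a x y)
    (hsymm : ∀ x y, a x y = a y x)
    (Δt : ℝ) (hΔt : 0 < Δt) (u : ℕ → H)
    (hrec : ∀ k, 1 ≤ k → ∀ w : H,
      (inner ℝ ((Δt ^ 2)⁻¹ • (u (k + 1) - (2 : ℝ) • u k + u (k - 1))) w : ℝ) + a (u k) w = 0) :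
    ∀ k, 1 ≤ k → discreteEnergy a Δt u k = discreteEnergy a Δt u (k - 1) := by
  intro k hk
  have hk1 : k - 1 + 1 = k := Nat.sub_add_cancel hk
  have hΔ : Δt ≠ 0 := ne_of_gt hΔt
  have hnegl : ∀ x y : H, a (-x) y = - a x y := by
    intro x y
    have := hsmull (-1) x y
    simpa using this
  have hsubl : ∀ x y z : H, a (x - y) z = a x z - a y z := by
    intro x y z
    rw [sub_eq_add_neg, haddl, hnegl, sub_eq_add_neg]
  have haddr : ∀ x y z : H, a x (y + z) = a x y + a x z := fun x y z => by
    rw [hsymm, haddl, hsymm y x, hsymm z x]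
  have hsubr : ∀ x y z : H, a x (y - z) = a x y - a x z := fun x y z => by
    rw [hsymm, hsubl, hsymm y x, hsymm z x]
  have hsmulr : ∀ (c : ℝ) (x y : H), a x (c • y) = c * a x y := fun c x y => by
    rw [hsymm, hsmull, hsymm]
  have key := hrec k hk (u (k + 1) - u (k - 1))
  simp only [inner_smul_left, inner_add_left, inner_sub_left, inner_sub_right,
    inner_smul_right, real_inner_smul_left, real_inner_smul_right,
    RCLike.conj_to_real, map_inv₀, conj_trivial, hsubr] at key
  simp only [discreteEnergy, hk1]
  rw [← real_inner_self_eq_norm_sq, ← real_inner_self_eq_norm_sq]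
  simp only [inner_smul_left, inner_smul_right, inner_sub_left, inner_sub_right,
    inner_add_left, inner_add_right, conj_trivial,
    haddl, haddr, hsubl, hsubr, hsmull, hsmulr]
  rw [real_inner_comm (u k) (u (k+1)), real_inner_comm (u (k-1)) (u k),
    hsymm (u k) (u (k+1)), hsymm (u (k-1)) (u k)] at *
  rw [real_inner_comm (u (k-1)) (u (k+1))] at key
  field_simp at key ⊢
  linear_combination 16 * key
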